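/- arXiv:2402.00966 — 16 statements merged into one kernel-verified Lean document; each statement's English description precedes it below -/
import Mathlib

section
/- The state u of the universal MTS U satisfies a Boudol-Larsen modal formula φ if and only if φ is a tautology (i.e., satisfied by every state in every MTS over A). -/
/-- A labelled transition system over actions `A` with states `S`. -/
abbrev LTS (A S : Type) := S → A → S → Prop

/-- A modal transition system over actions `A` with states `S`. -/
structure MTS (A S : Type) where
  may : S → A → S → Prop
  must : S → A → S → Prop
  must_may : ∀ {s a s'}, must s a s' → may s a s'

/-- `R` is a (modal) refinement relation between MTSs `M` and `N`. -/
def IsRefinement {A S T : Type} (M : MTS A S) (N : MTS A T) (R : S → T → Prop) : Prop :=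
  ∀ ⦃p q⦄, R p q →
    ((∀ a p', M.must p a p' → ∃ q', N.must q a q' ∧ R p' q') ∧
     (∀ a q', N.may q a q' → ∃ p', M.may p a p' ∧ R p' q'))

/-- Modal refinement preorder: `p ⊑ q`. -/
def Refines {A S T : Type} (M : MTS A S) (p : S) (N : MTS A T) (q : T) : Prop :=
  ∃ R, IsRefinement M N R ∧ R p q

/-- The universal (loosest) MTS `U` with single state `u` and may self-loops for all actions. -/
def UnivMTS (A : Type) : MTS A Unit :=
  ⟨fun _ _ _ => True, fun _ _ _ => False, fun h => h.elim⟩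

/-- `R` is a covariant-contravariant simulation w.r.t. signature `(Ar, Al, Abi)`. -/
def IsCCSim {A S T : Type} (Ar Al Abi : Set A) (P : LTS A S) (Q : LTS A T)
    (R : S → T → Prop) : Prop :=
  ∀ ⦃p q⦄, R p q →
    ((∀ a ∈ Ar ∪ Abi, ∀ p', P p a p' → ∃ q', Q q a q' ∧ R p' q') ∧
     (∀ a ∈ Al ∪ Abi, ∀ q', Q q a q' → ∃ p', P p a p' ∧ R p' q'))

/-- The covariant-contravariant simulation preorder `p ≲cc q`. -/
def CCpre {A S T : Type} (Ar Al Abi : Set A) (P : LTS A S) (Q : LTS A T)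
    (p : S) (q : T) : Prop :=
  ∃ R, IsCCSim Ar Al Abi P Q R ∧ R p q

/-- Boudol-Larsen modal formulae (the same syntax also serves for
covariant-contravariant modal logic). -/
inductive BL (A : Type) : Type
  | bot : BL A
  | top : BL A
  | and (φ ψ : BL A) : BL A
  | or (φ ψ : BL A) : BL A
  | box (a : A) (φ : BL A) : BL A
  | dia (a : A) (φ : BL A) : BL A

/-- Boudol-Larsen satisfaction over an MTS: `[a]` over may transitions,
`⟨a⟩` over must transitions. -/
def satMTS {A S : Type} (M : MTS A S) : S → BL A → Prop
  | _, .bot => False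
  | _, .top => True
  | p, .and φ ψ => satMTS M p φ ∧ satMTS M p ψ
  | p, .or φ ψ => satMTS M p φ ∨ satMTS M p ψ
  | p, .box a φ => ∀ p', M.may p a p' → satMTS M p' φ
  | p, .dia a φ => ∃ p', M.must p a p' ∧ satMTS M p' φ

/-- Satisfaction of modal formulae over an ordinary LTS. -/
def satLTS {A S : Type} (P : LTS A S) : S → BL A → Prop
  | _, .bot => False
  | _, .top => True
  | p, .and φ ψ => satLTS P p φ ∧ satLTS P p ψ
  | p, .or φ ψ => satLTS P p φ ∨ satLTS P p ψ
  | p, .box a φ => ∀ p', P p a p' → satLTS P p' φ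
  | p, .dia a φ => ∃ p', P p a p' ∧ satLTS P p' φ

/-- Well-formed covariant-contravariant modal formulae:
`⟨a⟩` only for `a ∈ Ar ∪ Abi` and `[b]` only for `b ∈ Al ∪ Abi`. -/
def CCForm {A : Type} (Ar Al Abi : Set A) : BL A → Prop
  | .bot => True
  | .top => True
  | .and φ ψ => CCForm Ar Al Abi φ ∧ CCForm Ar Al Abi ψ
  | .or φ ψ => CCForm Ar Al Abi φ ∧ CCForm Ar Al Abi ψ
  | .box a φ => a ∈ Al ∪ Abi ∧ CCForm Ar Al Abi φ
  | .dia a φ => a ∈ Ar ∪ Abi ∧ CCForm Ar Al Abi φ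

/-- A formula is existential if it contains no `[a]`-operators. -/
def Existential {A : Type} : BL A → Prop
  | .bot => True
  | .top => True
  | .and φ ψ => Existential φ ∧ Existential ψ
  | .or φ ψ => Existential φ ∧ Existential ψ
  | .box _ _ => False
  | .dia _ φ => Existential φ

/-- The translation `M` from covariant-contravariant LTSs to MTSs:
states are `Option S` with `none` playing the role of the fresh universal state `u`. -/
def MM {A S : Type} (Ar Abi : Set A) (P : LTS A S) : MTS A (Option S) where
  may s a s' :=
    match s, s' with
    | some p, some p' => P p a p'
    | some _, none => a ∈ Ar
    | none, none => True
    | none, some _ => False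
  must s a s' :=
    match s, s' with
    | some p, some p' => P p a p' ∧ a ∈ Ar ∪ Abi
    | _, _ => False
  must_may := by
    intro s a s' h
    match s, s' with
    | some p, some p' => exact h.1
    | some p, none => exact h.elim
    | none, some p' => exact h.elim
    | none, none => trivial

/-- `M(R) = R ∪ {(u, q) | q a state of M(Q)}`. -/
def MR {S T : Type} (R : S → T → Prop) : Option S → Option T → Prop
  | some p, some q => R p q
  | none, _ => True
  | some _, none => False

open Classical in
/-- The translation `MC` on Boudol-Larsen formulae. -/
noncomputable def MC {A : Type} (Ar Al Abi : Set A) : BL A → BL A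
  | .bot => .bot
  | .top => .top
  | .and φ ψ => .and (MC Ar Al Abi φ) (MC Ar Al Abi ψ)
  | .or φ ψ => .or (MC Ar Al Abi φ) (MC Ar Al Abi ψ)
  | .dia a φ => if a ∈ Ar ∪ Abi then .dia a (MC Ar Al Abi φ) else .bot
  | .box a φ => if a ∈ Al ∪ Abi then .box a (MC Ar Al Abi φ) else .top

/-- The translation `C` from MTSs to LTSs: actions `A ⊕ A`, where
`Sum.inl a` plays the role of `cv(a)` and `Sum.inr a` of `ct(a)`. -/
def CT {A S : Type} (M : MTS A S) : LTS (A ⊕ A) S :=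
  fun p x p' =>
    match x with
    | .inl a => M.must p a p'
    | .inr a => M.may p a p'

/-- The translation `C` on Boudol-Larsen formulae. -/
def CF {A : Type} : BL A → BL (A ⊕ A)
  | .bot => .bot
  | .top => .top
  | .and φ ψ => .and (CF φ) (CF ψ)
  | .or φ ψ => .or (CF φ) (CF ψ)
  | .dia a φ => .dia (.inl a) (CF φ)
  | .box a φ => .box (.inr a) (CF φ)

/-- The renaming `ρ` (mapping both `cv(a)` and `ct(a)` to `a`) applied to an LTS. -/
def rhoLTS {A S : Type} (P : LTS (A ⊕ A) S) : LTS A S :=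
  fun p a p' => P p (.inl a) p' ∨ P p (.inr a) p'

/-- The renaming `ρ` applied to an MTS. -/
def rhoMTS {A S : Type} (M : MTS (A ⊕ A) S) : MTS A S where
  may p a p' := M.may p (.inl a) p' ∨ M.may p (.inr a) p'
  must p a p' := M.must p (.inl a) p' ∨ M.must p (.inr a) p'
  must_may h := h.imp M.must_may M.must_may

/-- Image finiteness for MTSs. -/
def MTSImageFinite {A S : Type} (M : MTS A S) : Prop :=
  ∀ p a, {p' | M.may p a p'}.Finite

/-- Image finiteness for LTSs. -/
def LTSImageFinite {A S : Type} (P : LTS A S) : Prop :=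
  ∀ p a, {p' | P p a p'}.Finite

/-- `R` is a partial bisimulation with bisimulation set `B`. -/
def IsPB {A S T : Type} (B : Set A) (P : LTS A S) (Q : LTS A T) (R : S → T → Prop) : Prop :=
  ∀ ⦃p q⦄, R p q →
    ((∀ a p', P p a p' → ∃ q', Q q a q' ∧ R p' q') ∧
     (∀ b ∈ B, ∀ q', Q q b q' → ∃ p', P p b p' ∧ R p' q'))

/-- The partial bisimulation preorder `p ≲_B q`. -/
def PBpre {A S T : Type} (B : Set A) (P : LTS A S) (Q : LTS A T) (p : S) (q : T) : Prop :=
  ∃ R, IsPB B P Q R ∧ R p q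

/-- `R` is an ordinary simulation. -/
def IsSim {A S T : Type} (P : LTS A S) (Q : LTS A T) (R : S → T → Prop) : Prop :=
  ∀ ⦃p q⦄, R p q → ∀ a p', P p a p' → ∃ q', Q q a q' ∧ R p' q'

/-- The ordinary simulation preorder. -/
def SimPre {A S T : Type} (P : LTS A S) (Q : LTS A T) (p : S) (q : T) : Prop :=
  ∃ R, IsSim P Q R ∧ R p q

/-- BCCS-like process terms with nondeterministic choice. -/
inductive Proc (A : Type) : Type
  | zero : Proc A
  | act (a : A) (p : Proc A) : Proc A
  | plus (p q : Proc A) : Proc A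

/-- The transition relation of process terms. -/
inductive PTr {A : Type} : Proc A → A → Proc A → Prop
  | act (a : A) (p : Proc A) : PTr (.act a p) a p
  | plusL {p a p'} (q : Proc A) : PTr p a p' → PTr (.plus p q) a p'
  | plusR (p : Proc A) {q a q'} : PTr q a q' → PTr (.plus p q) a q'

/-- `u` satisfies `φ` iff `φ` is a tautology over all MTSs over `A`. -/
theorem univ_mts_sat_iff_tautology (A : Type) (φ : BL A) :
    satMTS (UnivMTS A) () φ ↔ ∀ (S : Type) (M : MTS A S) (p : S), satMTS M p φ := by
  constructor
  · intro h S M p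
    induction φ generalizing p with
    | bot => exact h.elim
    | top => trivial
    | and φ ψ ihφ ihψ => exact ⟨ihφ h.1 p, ihψ h.2 p⟩
    | or φ ψ ihφ ihψ =>
      rcases h with h | h
      · exact Or.inl (ihφ h p)
      · exact Or.inr (ihψ h p)
    | box a φ ih => exact fun p' _ => ih (h () trivial) p'
    | dia a φ ih => exact absurd h.choose_spec.1 (fun h => h)
  · intro h
    exact h Unit (UnivMTS A) ()
end

section
/- If modal refinement p ⊑ q holds between states of MTSs, then every Boudol-Larsen modal formula satisfied by p is also satisfied by q. -/
/-- refinement preserves satisfaction of Boudol-Larsen formulae. -/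
theorem refines_preserves_BL (A S T : Type) (M : MTS A S) (N : MTS A T) (p : S) (q : T)
    (h : Refines M p N q) :
    ∀ φ : BL A, satMTS M p φ → satMTS N q φ := by
  obtain ⟨R, hR, hpq⟩ := h
  intro φ
  induction φ generalizing p q with
  | bot => intro h; exact h.elim
  | top => intro _; trivial
  | and φ ψ ihφ ihψ => exact fun ⟨h1, h2⟩ => ⟨ihφ p q hpq h1, ihψ p q hpq h2⟩
  | or φ ψ ihφ ihψ =>
    rintro (h1 | h2)
    · exact Or.inl (ihφ p q hpq h1)
    · exact Or.inr (ihψ p q hpq h2)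
  | box a φ ih =>
    intro hs q' hq'
    obtain ⟨p', hp', hR'⟩ := (hR hpq).2 a q' hq'
    exact ih p' q' hR' (hs p' hp')
  | dia a φ ih =>
    rintro ⟨p', hp', hs⟩
    obtain ⟨q', hq', hR'⟩ := (hR hpq).1 a p' hp'
    exact ⟨q', hq', ih p' q' hR' hs⟩
end

section
/- For image-finite MTSs, if every Boudol-Larsen modal formula satisfied by p is also satisfied by q, then p ⊑ q. -/
/-! If every formula true at `p` holds at `q`, then a must-step `p -a→ p'` unmatched by `q`
would give, for each of the finitely many must-successors `q'` of `q`, a formula true at `p'`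
and false at `q'`; their conjunction under `⟨a⟩` is true at `p` and false at `q`. Dually, an
unmatched may-step of `q` is refuted by a disjunction under `[a]`. Hence theory inclusion is
itself a refinement relation. -/

section Separation

variable {A S T : Type} (M : MTS A S) (N : MTS A T)

theorem exists_satMTS_forall_not_satMTS {s : Set T} (hs : s.Finite) (x : S)
    (h : ∀ y ∈ s, ∃ φ, satMTS M x φ ∧ ¬ satMTS N y φ) :
    ∃ φ, satMTS M x φ ∧ ∀ y ∈ s, ¬ satMTS N y φ := by
  induction s, hs using Set.Finite.induction_on with
  | empty => exact ⟨.top, trivial, by simp⟩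
  | @insert y s _ _ ih =>
    obtain ⟨φ, hxφ, hyφ⟩ := h y (Set.mem_insert y s)
    obtain ⟨ψ, hxψ, hsψ⟩ := ih fun z hz => h z (Set.mem_insert_of_mem y hz)
    refine ⟨.and φ ψ, ⟨hxφ, hxψ⟩, ?_⟩
    rintro z (rfl | hz) ⟨hzφ, hzψ⟩
    exacts [hyφ hzφ, hsψ z hz hzψ]

theorem exists_forall_satMTS_not_satMTS {s : Set S} (hs : s.Finite) (y : T)
    (h : ∀ x ∈ s, ∃ φ, satMTS M x φ ∧ ¬ satMTS N y φ) :
    ∃ φ, (∀ x ∈ s, satMTS M x φ) ∧ ¬ satMTS N y φ := by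
  induction s, hs using Set.Finite.induction_on with
  | empty => exact ⟨.bot, by simp, id⟩
  | @insert x s _ _ ih =>
    obtain ⟨φ, hxφ, hyφ⟩ := h x (Set.mem_insert x s)
    obtain ⟨ψ, hsψ, hyψ⟩ := ih fun z hz => h z (Set.mem_insert_of_mem x hz)
    refine ⟨.or φ ψ, ?_, fun hy => hy.elim hyφ hyψ⟩
    rintro z (rfl | hz)
    exacts [Or.inl hxφ, Or.inr (hsψ z hz)]

end Separation

def BLIncluded {A S T : Type} (M : MTS A S) (N : MTS A T) (p : S) (q : T) : Prop :=
  ∀ φ : BL A, satMTS M p φ → satMTS N q φ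

theorem isRefinement_BLIncluded {A S T : Type} {M : MTS A S} {N : MTS A T}
    (hM : MTSImageFinite M) (hN : MTSImageFinite N) :
    IsRefinement M N (BLIncluded M N) := by
  intro p q hpq
  constructor
  · intro a p' hp'
    by_contra! hsep
    simp only [BLIncluded, not_forall, exists_prop] at hsep
    have hfin : {q' | N.must q a q'}.Finite := (hN q a).subset fun _ => N.must_may
    obtain ⟨φ, hp'φ, hφ⟩ := exists_satMTS_forall_not_satMTS M N hfin p' hsep
    obtain ⟨q', hq', hq'φ⟩ := hpq (.dia a φ) ⟨p', hp', hp'φ⟩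
    exact hφ q' hq' hq'φ
  · intro a q' hq'
    by_contra! hsep
    simp only [BLIncluded, not_forall, exists_prop] at hsep
    obtain ⟨φ, hφ, hq'φ⟩ := exists_forall_satMTS_not_satMTS M N (hM p a) q' hsep
    exact hq'φ (hpq (.box a φ) hφ q' hq')

/-- for image-finite MTSs, inclusion of Boudol-Larsen theories implies refinement. -/
theorem BL_inclusion_implies_refines (A S T : Type) (M : MTS A S) (N : MTS A T)
    (hM : MTSImageFinite M) (hN : MTSImageFinite N) (p : S) (q : T)
    (h : ∀ φ : BL A, satMTS M p φ → satMTS N q φ) :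
    Refines M p N q :=
  ⟨BLIncluded M N, isRefinement_BLIncluded hM hN, h⟩
end

section
/- If p ≲cc q holds between states of LTSs over the same signature, then every covariant-contravariant modal formula satisfied by p is also satisfied by q. -/
/-- `≲cc` preserves satisfaction of covariant-contravariant modal formulae. -/
theorem ccpre_preserves_cc_formulae (A S T : Type) (Ar Al Abi : Set A)
    (h1 : Disjoint Ar Al) (h2 : Disjoint Ar Abi) (h3 : Disjoint Al Abi)
    (hcover : Ar ∪ Al ∪ Abi = Set.univ)
    (P : LTS A S) (Q : LTS A T) (p : S) (q : T)
    (h : CCpre Ar Al Abi P Q p q) :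
    ∀ φ : BL A, CCForm Ar Al Abi φ → satLTS P p φ → satLTS Q q φ := by
  obtain ⟨R, hR, hpq⟩ := h
  intro φ
  induction φ generalizing p q with
  | bot => intro _ hp; exact hp.elim
  | top => intro _ _; trivial
  | and φ ψ ihφ ihψ =>
    rintro ⟨hf1, hf2⟩ ⟨hs1, hs2⟩
    exact ⟨ihφ p q hpq hf1 hs1, ihψ p q hpq hf2 hs2⟩
  | or φ ψ ihφ ihψ =>
    rintro ⟨hf1, hf2⟩ (hs | hs)
    · exact Or.inl (ihφ p q hpq hf1 hs)
    · exact Or.inr (ihψ p q hpq hf2 hs)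
  | box a φ ih =>
    rintro ⟨ha, hf⟩ hs q' hq'
    obtain ⟨p', hp', hR'⟩ := (hR hpq).2 a ha q' hq'
    exact ih p' q' hR' hf (hs p' hp')
  | dia a φ ih =>
    rintro ⟨ha, hf⟩ ⟨p', hp', hs⟩
    obtain ⟨q', hq', hR'⟩ := (hR hpq).1 a ha p' hp'
    exact ⟨q', hq', ih p' q' hR' hf hs⟩
end

section
/- For image-finite LTSs with the same signature, if every covariant-contravariant modal formula satisfied by p is also satisfied by q, then p ≲cc q. -/
section CCLogic

variable {A S T : Type} {Ar Al Abi : Set A} {P : LTS A S} {Q : LTS A T}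

def CCTheoryLE (Ar Al Abi : Set A) (P : LTS A S) (Q : LTS A T) (p : S) (q : T) : Prop :=
  ∀ φ : BL A, CCForm Ar Al Abi φ → satLTS P p φ → satLTS Q q φ

lemma not_ccTheoryLE_iff {p : S} {q : T} :
    ¬ CCTheoryLE Ar Al Abi P Q p q ↔
      ∃ φ, CCForm Ar Al Abi φ ∧ satLTS P p φ ∧ ¬ satLTS Q q φ := by
  simp only [CCTheoryLE, not_forall, exists_prop]

lemma exists_ccForm_sat_and_forall_not_sat {p : S} {s : Set T} (hs : s.Finite)
    (hsep : ∀ t ∈ s, ¬ CCTheoryLE Ar Al Abi P Q p t) :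
    ∃ ψ, CCForm Ar Al Abi ψ ∧ satLTS P p ψ ∧ ∀ t ∈ s, ¬ satLTS Q t ψ := by
  induction s, hs using Set.Finite.induction_on with
  | empty => exact ⟨.top, trivial, trivial, by simp⟩
  | @insert t s _ _ ih =>
    obtain ⟨φ, hφ, hpφ, htφ⟩ := not_ccTheoryLE_iff.mp (hsep t (Set.mem_insert t s))
    obtain ⟨ψ, hψ, hpψ, hsψ⟩ := ih fun u hu => hsep u (Set.mem_insert_of_mem t hu)
    refine ⟨.and φ ψ, ⟨hφ, hψ⟩, ⟨hpφ, hpψ⟩, ?_⟩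
    rintro u (rfl | hu) ⟨huφ, huψ⟩
    exacts [htφ huφ, hsψ u hu huψ]

lemma exists_ccForm_forall_sat_and_not_sat {q : T} {s : Set S} (hs : s.Finite)
    (hsep : ∀ t ∈ s, ¬ CCTheoryLE Ar Al Abi P Q t q) :
    ∃ ψ, CCForm Ar Al Abi ψ ∧ (∀ t ∈ s, satLTS P t ψ) ∧ ¬ satLTS Q q ψ := by
  induction s, hs using Set.Finite.induction_on with
  | empty => exact ⟨.bot, trivial, by simp, id⟩
  | @insert t s _ _ ih =>
    obtain ⟨φ, hφ, htφ, hqφ⟩ := not_ccTheoryLE_iff.mp (hsep t (Set.mem_insert t s))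
    obtain ⟨ψ, hψ, hsψ, hqψ⟩ := ih fun u hu => hsep u (Set.mem_insert_of_mem t hu)
    refine ⟨.or φ ψ, ⟨hφ, hψ⟩, ?_, fun h => h.elim hqφ hqψ⟩
    rintro u (rfl | hu)
    exacts [Or.inl htφ, Or.inr (hsψ u hu)]

lemma CCTheoryLE.exists_right_succ (hQ : LTSImageFinite Q) {p p' : S} {q : T}
    (hpq : CCTheoryLE Ar Al Abi P Q p q) {a : A} (ha : a ∈ Ar ∪ Abi) (hp' : P p a p') :
    ∃ q', Q q a q' ∧ CCTheoryLE Ar Al Abi P Q p' q' := by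
  by_contra! hsep
  obtain ⟨ψ, hψ, hp'ψ, hsuccψ⟩ := exists_ccForm_sat_and_forall_not_sat (hQ q a) hsep
  obtain ⟨q', hq', hq'ψ⟩ := hpq (.dia a ψ) ⟨ha, hψ⟩ ⟨p', hp', hp'ψ⟩
  exact hsuccψ q' hq' hq'ψ

lemma CCTheoryLE.exists_left_succ (hP : LTSImageFinite P) {p : S} {q q' : T}
    (hpq : CCTheoryLE Ar Al Abi P Q p q) {a : A} (ha : a ∈ Al ∪ Abi) (hq' : Q q a q') :
    ∃ p', P p a p' ∧ CCTheoryLE Ar Al Abi P Q p' q' := by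
  by_contra! hsep
  obtain ⟨ψ, hψ, hsuccψ, hq'ψ⟩ := exists_ccForm_forall_sat_and_not_sat (hP p a) hsep
  exact hq'ψ (hpq (.box a ψ) ⟨ha, hψ⟩ hsuccψ q' hq')

lemma isCCSim_ccTheoryLE (hP : LTSImageFinite P) (hQ : LTSImageFinite Q) :
    IsCCSim Ar Al Abi P Q (CCTheoryLE Ar Al Abi P Q) := fun _ _ hpq =>
  ⟨fun _ ha _ hp' => hpq.exists_right_succ hQ ha hp',
   fun _ ha _ hq' => hpq.exists_left_succ hP ha hq'⟩

end CCLogic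

theorem cc_formulae_inclusion_implies_ccpre_general (A S T : Type) (Ar Al Abi : Set A)
    (P : LTS A S) (Q : LTS A T) (hP : LTSImageFinite P) (hQ : LTSImageFinite Q)
    (p : S) (q : T)
    (h : ∀ φ : BL A, CCForm Ar Al Abi φ → satLTS P p φ → satLTS Q q φ) :
    CCpre Ar Al Abi P Q p q :=
  ⟨CCTheoryLE Ar Al Abi P Q, isCCSim_ccTheoryLE hP hQ, h⟩

/-- for image-finite LTSs over the same signature, inclusion of
covariant-contravariant modal theories implies `≲cc`. -/
theorem cc_formulae_inclusion_implies_ccpre (A S T : Type) (Ar Al Abi : Set A)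
    (h1 : Disjoint Ar Al) (h2 : Disjoint Ar Abi) (h3 : Disjoint Al Abi)
    (hcover : Ar ∪ Al ∪ Abi = Set.univ)
    (P : LTS A S) (Q : LTS A T) (hP : LTSImageFinite P) (hQ : LTSImageFinite Q)
    (p : S) (q : T)
    (h : ∀ φ : BL A, CCForm Ar Al Abi φ → satLTS P p φ → satLTS Q q φ) :
    CCpre Ar Al Abi P Q p q :=
  cc_formulae_inclusion_implies_ccpre_general A S T Ar Al Abi P Q hP hQ p q h
end

section
/- A relation R between LTSs P and Q (with signature (A^r, A^l, A^bi)) is a covariant-contravariant simulation if and only if M(R) := R ∪ {(u, q) | q a state of M(Q)} is a refinement between the MTSs M(P) and M(Q). -/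
/-- `R` is a covariant-contravariant simulation between `P` and `Q`
iff `M(R)` is a refinement between `M(P)` and `M(Q)`. -/
theorem cc_sim_iff_MM_refinement (A S T : Type) (Ar Al Abi : Set A)
    (h1 : Disjoint Ar Al) (h2 : Disjoint Ar Abi) (h3 : Disjoint Al Abi)
    (hcover : Ar ∪ Al ∪ Abi = Set.univ)
    (P : LTS A S) (Q : LTS A T) (R : S → T → Prop) :
    IsCCSim Ar Al Abi P Q R ↔ IsRefinement (MM Ar Abi P) (MM Ar Abi Q) (MR R) := by
  constructor
  · intro hcc
    rintro (_ | p) (_ | q) hpq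
    · -- none, none
      refine ⟨fun a p' hm => hm.elim, fun a q' hq => ⟨none, trivial, trivial⟩⟩
    · refine ⟨fun a p' hm => hm.elim, fun a q' hq => ⟨none, trivial, trivial⟩⟩
    · exact hpq.elim
    · -- some p, some q
      have hR : R p q := hpq
      obtain ⟨hfwd, hbwd⟩ := hcc hR
      constructor
      · rintro a (_ | p') hm
        · exact hm.elim
        · obtain ⟨hP, ha⟩ := hm
          obtain ⟨q', hQ, hR'⟩ := hfwd a ha p' hP
          exact ⟨some q', ⟨hQ, ha⟩, hR'⟩
      · rintro a (_ | q') hq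
        · -- may (some q) a none : a ∈ Ar
          exact ⟨none, hq, trivial⟩
        · -- Q q a q'
          by_cases ha : a ∈ Al ∪ Abi
          · obtain ⟨p', hP, hR'⟩ := hbwd a ha q' hq
            exact ⟨some p', hP, hR'⟩
          · have haAr : a ∈ Ar := by
              have : a ∈ Ar ∪ Al ∪ Abi := hcover ▸ Set.mem_univ a
              rcases this with (h | h) | h
              · exact h
              · exact absurd (Or.inl h) ha
              · exact absurd (Or.inr h) ha
            exact ⟨none, haAr, trivial⟩
  · intro href
    intro p q hR
    have hpq : MR R (some p) (some q) := hR
    obtain ⟨hfwd, hbwd⟩ := href hpq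
    constructor
    · intro a ha p' hP
      obtain ⟨q', hmust, hR'⟩ := hfwd a (some p') ⟨hP, ha⟩
      match q' with
      | none => exact hmust.elim
      | some q' => exact ⟨q', hmust.1, hR'⟩
    · intro a ha q' hQ
      obtain ⟨p', hmay, hR'⟩ := hbwd a (some q') hQ
      match p' with
      | none =>
        exfalso
        rcases ha with h | h
        · exact h1.le_bot ⟨hmay, h⟩
        · exact h2.le_bot ⟨hmay, h⟩
      | some p' => exact ⟨p', hmay, hR'⟩
end

section
/- For LTSs P and Q with the same signature and states p ∈ P, q ∈ Q: (P, p) ≲cc (Q, q) if and only if (M(P), p) ⊑ (M(Q), q). -/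
/-- `(P, p) ≲cc (Q, q)` iff `(M(P), p) ⊑ (M(Q), q)`. -/
theorem ccpre_iff_MM_refines (A S T : Type) (Ar Al Abi : Set A)
    (h1 : Disjoint Ar Al) (h2 : Disjoint Ar Abi) (h3 : Disjoint Al Abi)
    (hcover : Ar ∪ Al ∪ Abi = Set.univ)
    (P : LTS A S) (Q : LTS A T) (p : S) (q : T) :
    CCpre Ar Al Abi P Q p q ↔ Refines (MM Ar Abi P) (some p) (MM Ar Abi Q) (some q) := by
  constructor
  · rintro ⟨R, hR, hpq⟩
    refine ⟨MR R, ?_, hpq⟩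
    rintro s t hst
    match s, t with
    | some p, none => exact hst.elim
    | none, t =>
      refine ⟨fun a p' h => h.elim, fun a q' hq' => ⟨none, trivial, ?_⟩⟩
      match q' with
      | none => trivial
      | some q'' => trivial
    | some p, some q =>
      obtain ⟨hfwd, hbwd⟩ := hR hst
      constructor
      · rintro a p' hmust
        match p' with
        | none => exact hmust.elim
        | some p' =>
          obtain ⟨hP, ha⟩ := hmust
          obtain ⟨q', hQ, hR'⟩ := hfwd a ha p' hP
          exact ⟨some q', ⟨hQ, ha⟩, hR'⟩
      · rintro a q' hmay
        match q' with
        | none => exact ⟨none, hmay, trivial⟩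
        | some q' =>
          by_cases ha : a ∈ Al ∪ Abi
          · obtain ⟨p', hP, hR'⟩ := hbwd a ha q' hmay
            exact ⟨some p', hP, hR'⟩
          · have haAr : a ∈ Ar := by
              have : a ∈ Ar ∪ Al ∪ Abi := hcover ▸ Set.mem_univ a
              rcases this with (h | h) | h
              · exact h
              · exact absurd (Or.inl h) ha
              · exact absurd (Or.inr h) ha
            exact ⟨none, haAr, trivial⟩
  · rintro ⟨R, hR, hpq⟩
    refine ⟨fun p q => R (some p) (some q), ?_, hpq⟩
    rintro p q hst
    obtain ⟨hfwd, hbwd⟩ := hR hst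
    constructor
    · rintro a ha p' hP
      obtain ⟨q', hmust, hR'⟩ := hfwd a (some p') ⟨hP, ha⟩
      match q' with
      | none => exact hmust.elim
      | some q' => exact ⟨q', hmust.1, hR'⟩
    · rintro a ha q' hQ
      obtain ⟨p', hmay, hR'⟩ := hbwd a (some q') hQ
      match p' with
      | some p' => exact ⟨p', hmay, hR'⟩
      | none =>
        exfalso
        rcases ha with h | h
        · exact h1.le_bot ⟨hmay, h⟩
        · exact h2.le_bot ⟨hmay, h⟩
end

section
/- For every LTS P with signature (A^r, A^l, A^bi), state p ∈ P, and covariant-contravariant modal formula φ: (P, p) ⊨ φ if and only if (M(P), p) ⊨ φ, where on the right-hand side φ is read as a Boudol-Larsen formula over A = A^r ∪ A^l ∪ A^bi. -/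
/-- `(P, p) ⊨ φ` iff `(M(P), p) ⊨ φ`, for covariant-contravariant
modal formulae `φ`, read on the right as Boudol-Larsen formulae. -/
theorem satLTS_iff_satMTS_MM (A S : Type) (Ar Al Abi : Set A)
    (h1 : Disjoint Ar Al) (h2 : Disjoint Ar Abi) (h3 : Disjoint Al Abi)
    (hcover : Ar ∪ Al ∪ Abi = Set.univ)
    (P : LTS A S) (p : S) (φ : BL A) (hφ : CCForm Ar Al Abi φ) :
    satLTS P p φ ↔ satMTS (MM Ar Abi P) (some p) φ := by
  induction φ generalizing p with
  | bot => exact Iff.rfl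
  | top => exact Iff.rfl
  | and φ ψ ihφ ihψ =>
    exact and_congr (ihφ p hφ.1) (ihψ p hφ.2)
  | or φ ψ ihφ ihψ =>
    exact or_congr (ihφ p hφ.1) (ihψ p hφ.2)
  | box a φ ih =>
    obtain ⟨ha, hφ'⟩ := hφ
    have hnotAr : a ∉ Ar := by
      rcases ha with h | h
      · exact fun hr => h1.ne_of_mem hr h rfl
      · exact fun hr => h2.ne_of_mem hr h rfl
    constructor
    · intro h p' hmay
      match p' with
      | some p' => exact (ih p' hφ').mp (h p' hmay)
      | none => exact absurd hmay hnotAr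
    · intro h p' htr
      exact (ih p' hφ').mpr (h (some p') htr)
  | dia a φ ih =>
    obtain ⟨ha, hφ'⟩ := hφ
    constructor
    · rintro ⟨p', htr, hs⟩
      exact ⟨some p', ⟨htr, ha⟩, (ih p' hφ').mp hs⟩
    · rintro ⟨p', hmust, hs⟩
      match p' with
      | some p' => exact ⟨p', hmust.1, (ih p' hφ').mpr hs⟩
      | none => exact hmust.elim
end

section
/- Let P be an LTS over signature (A^r, A^l, A^bi), p ∈ P, and φ a Boudol-Larsen formula over A = A^r ∪ A^l ∪ A^bi. If (M(P), p) ⊨ φ then (P, p) ⊨ MC(φ), where MC replaces ⟨a⟩ψ by ⊥ when a ∈ A^l and [a]ψ by ⊤ when a ∈ A^r, acting homomorphically otherwise. -/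
/-- if `(M(P), p) ⊨ φ` then `(P, p) ⊨ MC(φ)`. -/
theorem MM_sat_implies_MC_sat (A S : Type) (Ar Al Abi : Set A)
    (h1 : Disjoint Ar Al) (h2 : Disjoint Ar Abi) (h3 : Disjoint Al Abi)
    (hcover : Ar ∪ Al ∪ Abi = Set.univ)
    (P : LTS A S) (p : S) (φ : BL A)
    (h : satMTS (MM Ar Abi P) (some p) φ) :
    satLTS P p (MC Ar Al Abi φ) := by
  induction φ generalizing p with
  | bot => exact h
  | top => trivial
  | and φ ψ ihφ ihψ => exact ⟨ihφ p h.1, ihψ p h.2⟩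
  | or φ ψ ihφ ihψ =>
    cases h with
    | inl h => exact Or.inl (ihφ p h)
    | inr h => exact Or.inr (ihψ p h)
  | box a φ ih =>
    unfold MC
    split
    · intro p' hp'
      exact ih p' (h (some p') hp')
    · trivial
  | dia a φ ih =>
    obtain ⟨p', hmust, hsat⟩ := h
    match p', hmust with
    | some q, ⟨hPq, ha⟩ =>
      unfold MC
      rw [if_pos ha]
      exact ⟨q, hPq, ih q hsat⟩
end

section
/- Let P be an LTS over signature (A^r, A^l, A^bi), p ∈ P, and φ a Boudol-Larsen formula over A = A^r ∪ A^l ∪ A^bi. If (P, p) ⊨ MC(φ) and either φ is existential (contains no [a]-operators) or A^r = ∅, then (M(P), p) ⊨ φ. -/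
/-- if `(P, p) ⊨ MC(φ)` and `φ` is existential or `Ar = ∅`,
then `(M(P), p) ⊨ φ`. -/
theorem MC_sat_implies_MM_sat (A S : Type) (Ar Al Abi : Set A)
    (h1 : Disjoint Ar Al) (h2 : Disjoint Ar Abi) (h3 : Disjoint Al Abi)
    (hcover : Ar ∪ Al ∪ Abi = Set.univ)
    (P : LTS A S) (p : S) (φ : BL A)
    (h : satLTS P p (MC Ar Al Abi φ))
    (hside : Existential φ ∨ Ar = ∅) :
    satMTS (MM Ar Abi P) (some p) φ := by
  induction φ generalizing p with
  | bot => exact h.elim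
  | top => trivial
  | and φ ψ ihφ ihψ =>
    exact ⟨ihφ p h.1 (hside.imp (·.1) id), ihψ p h.2 (hside.imp (·.2) id)⟩
  | or φ ψ ihφ ihψ =>
    exact h.imp (fun h => ihφ p h (hside.imp (·.1) id))
      (fun h => ihψ p h (hside.imp (·.2) id))
  | box a φ ihφ =>
    have hAr : Ar = ∅ := hside.resolve_left (fun h => h.elim)
    intro s' hmay
    match s' with
    | none =>
      simp only [MM] at hmay
      rw [hAr] at hmay; exact hmay.elim
    | some p' =>
      have ha : a ∈ Al ∪ Abi := by
        have := Set.eq_univ_iff_forall.mp hcover a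
        rw [hAr] at this
        simpa using this
      simp only [MC, if_pos ha] at h
      exact ihφ p' (h p' hmay) (Or.inr hAr)
  | dia a φ ihφ =>
    by_cases ha : a ∈ Ar ∪ Abi
    · simp only [MC, if_pos ha] at h
      obtain ⟨p', htr, hsat⟩ := h
      exact ⟨some p', ⟨htr, ha⟩, ihφ p' hsat (hside.imp id id)⟩
    · simp only [MC, if_neg ha] at h
      exact h.elim
end

section
/- A relation R is a refinement between MTSs P and Q if and only if R is a covariant-contravariant simulation between the LTSs C(P) and C(Q). -/
/-- `R` is a refinement between MTSs `P` and `Q` iff `R` is a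
covariant-contravariant simulation between the LTSs `C(P)` and `C(Q)` over the
signature `Ar = {cv(a)}`, `Al = {ct(a)}`, `Abi = ∅`. -/
theorem refinement_iff_CT_cc_sim (A S T : Type)
    (P : MTS A S) (Q : MTS A T) (R : S → T → Prop) :
    IsRefinement P Q R ↔
      IsCCSim (Set.range (Sum.inl : A → A ⊕ A)) (Set.range (Sum.inr : A → A ⊕ A)) ∅
        (CT P) (CT Q) R := by
  constructor
  · intro h p q hpq
    obtain ⟨h1, h2⟩ := h hpq
    constructor
    · rintro x hx p' hp'
      rcases hx with ⟨a, rfl⟩ | hx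
      · obtain ⟨q', hq', hR⟩ := h1 a p' hp'
        exact ⟨q', hq', hR⟩
      · exact absurd hx (by simp)
    · rintro x hx q' hq'
      rcases hx with ⟨a, rfl⟩ | hx
      · obtain ⟨p', hp', hR⟩ := h2 a q' hq'
        exact ⟨p', hp', hR⟩
      · exact absurd hx (by simp)
  · intro h p q hpq
    obtain ⟨h1, h2⟩ := h hpq
    constructor
    · intro a p' hp'
      exact h1 (.inl a) (Or.inl ⟨a, rfl⟩) p' hp'
    · intro a q' hq'
      exact h2 (.inr a) (Or.inl ⟨a, rfl⟩) q' hq'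
end

section
/- For MTSs P and Q over the same action set A and states p ∈ P, q ∈ Q: (P, p) ⊑ (Q, q) if and only if (C(P), p) ≲cc (C(Q), q). -/
/-- `(P, p) ⊑ (Q, q)` iff `(C(P), p) ≲cc (C(Q), q)`. -/
theorem refines_iff_CT_ccpre (A S T : Type)
    (P : MTS A S) (Q : MTS A T) (p : S) (q : T) :
    Refines P p Q q ↔
      CCpre (Set.range (Sum.inl : A → A ⊕ A)) (Set.range (Sum.inr : A → A ⊕ A)) ∅
        (CT P) (CT Q) p q := by
  constructor
  · rintro ⟨R, hR, hpq⟩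
    refine ⟨R, ?_, hpq⟩
    intro p q hpq'
    obtain ⟨h1, h2⟩ := hR hpq'
    constructor
    · rintro x hx p' htr
      obtain ⟨a, rfl⟩ : x ∈ Set.range Sum.inl := by simpa using hx
      obtain ⟨q', hq', hR'⟩ := h1 a p' htr
      exact ⟨q', hq', hR'⟩
    · rintro x hx q' htr
      obtain ⟨a, rfl⟩ : x ∈ Set.range Sum.inr := by simpa using hx
      obtain ⟨p', hp', hR'⟩ := h2 a q' htr
      exact ⟨p', hp', hR'⟩
  · rintro ⟨R, hR, hpq⟩
    refine ⟨R, ?_, hpq⟩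
    intro p q hpq'
    obtain ⟨h1, h2⟩ := hR hpq'
    constructor
    · intro a p' hmust
      exact h1 (Sum.inl a) (Or.inl ⟨a, rfl⟩) p' hmust
    · intro a q' hmay
      exact h2 (Sum.inr a) (Or.inl ⟨a, rfl⟩) q' hmay
end

section
/- For every MTS P, state p ∈ P, and Boudol-Larsen formula φ: (P, p) ⊨ φ if and only if (C(P), p) ⊨ C(φ), where C on formulae is the homomorphism with C(⟨a⟩φ) = ⟨cv(a)⟩C(φ) and C([a]φ) = [ct(a)]C(φ). -/
/-- `(P, p) ⊨ φ` iff `(C(P), p) ⊨ C(φ)`. -/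
theorem satMTS_iff_satLTS_CT (A S : Type) (P : MTS A S) (p : S) (φ : BL A) :
    satMTS P p φ ↔ satLTS (CT P) p (CF φ) := by
  induction φ generalizing p with
  | bot => rfl
  | top => rfl
  | and φ ψ ihφ ihψ => exact and_congr (ihφ p) (ihψ p)
  | or φ ψ ihφ ihψ => exact or_congr (ihφ p) (ihψ p)
  | box a φ ih => exact forall_congr' fun p' => imp_congr Iff.rfl (ih p')
  | dia a φ ih => exact exists_congr fun p' => and_congr Iff.rfl (ih p')
end

section
/- Let P be an MTS over actions A and ρ the renaming mapping both cv(a) and ct(a) to a. Then the identity relation witnesses (ρ(M(C(P))), p) ⊑ (P, p) for every p ∈ P; dually, for every LTS P, the identity relation witnesses (P, p) ≲cc (ρ(C(M(P))), p) for every p ∈ P. Moreover the converse relations fail in general: there is a one-state MTS P with no transitions and (P, p) ⋢ (ρ(M(C(P))), p), and a one-state LTS P with A^r = {a} and no transitions with (ρ(C(M(P))), p) ≴cc (P, p). -/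
/-- the identity relation witnesses `(ρ(M(C(P))), p) ⊑ (P, p)` for
MTSs `P` and `(P, p) ≲cc (ρ(C(M(P))), p)` for LTSs `P`, while the converse
relations fail in general, as witnessed by one-state systems with no transitions. -/
theorem rho_composite_approximations :
    (∀ (A S : Type) (P : MTS A S),
      IsRefinement (rhoMTS (MM (Set.range (Sum.inl : A → A ⊕ A)) ∅ (CT P))) P
        (fun x q => x = some q) ∧
      ∀ p : S, Refines (rhoMTS (MM (Set.range (Sum.inl : A → A ⊕ A)) ∅ (CT P))) (some p)
        P p) ∧
    (∀ (A S : Type) (Ar Al Abi : Set A),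
      Disjoint Ar Al → Disjoint Ar Abi → Disjoint Al Abi → Ar ∪ Al ∪ Abi = Set.univ →
      ∀ P : LTS A S,
      IsCCSim Ar Al Abi P (rhoLTS (CT (MM Ar Abi P))) (fun p x => some p = x) ∧
      ∀ p : S, CCpre Ar Al Abi P (rhoLTS (CT (MM Ar Abi P))) p (some p)) ∧
    (¬ Refines (⟨fun _ _ _ => False, fun _ _ _ => False, fun h => h.elim⟩ : MTS Unit Unit) ()
        (rhoMTS (MM (Set.range (Sum.inl : Unit → Unit ⊕ Unit)) ∅
          (CT (⟨fun _ _ _ => False, fun _ _ _ => False, fun h => h.elim⟩ : MTS Unit Unit))))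
        (some ())) ∧
    (¬ CCpre (Set.univ : Set Unit) ∅ ∅
        (rhoLTS (CT (MM (Set.univ : Set Unit) ∅ (fun (_ : Unit) (_ : Unit) (_ : Unit) => False))))
        (fun (_ : Unit) (_ : Unit) (_ : Unit) => False)
        (some ()) ()) := by
  refine ⟨?_, ?_, ?_, ?_⟩
  · intro A S P
    have key : IsRefinement (rhoMTS (MM (Set.range (Sum.inl : A → A ⊕ A)) ∅ (CT P))) P
        (fun x q => x = some q) := by
      rintro x q rfl
      constructor
      · rintro a x' h
        cases x' with
        | some p' =>
          rcases h with h | h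
          · exact ⟨p', h.1, rfl⟩
          · rcases h.2 with ⟨b, hb⟩ | hb
            · exact absurd hb (by simp)
            · exact hb.elim
        | none => rcases h with h | h <;> exact h.elim
      · intro a q' hq
        exact ⟨some q', Or.inr hq, rfl⟩
    exact ⟨key, fun p => ⟨_, key, rfl⟩⟩
  · intro A S Ar Al Abi h1 h2 h3 h4 P
    have key : IsCCSim Ar Al Abi P (rhoLTS (CT (MM Ar Abi P))) (fun p x => some p = x) := by
      rintro p x h
      cases h
      constructor
      · intro a _ p' hp
        exact ⟨some p', Or.inr hp, rfl⟩
      · intro a ha x' hx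
        cases x' with
        | some p' =>
          rcases hx with hx | hx
          · exact ⟨p', hx.1, rfl⟩
          · exact ⟨p', hx, rfl⟩
        | none =>
          rcases hx with hx | hx
          · exact hx.elim
          · rcases ha with ha | ha
            · exact absurd ha (Set.disjoint_left.mp h1 hx)
            · exact absurd ha (Set.disjoint_left.mp h2 hx)
    exact ⟨key, fun p => ⟨_, key, rfl⟩⟩
  · rintro ⟨R, hR, hr⟩
    obtain ⟨_, h2⟩ := hR hr
    obtain ⟨p', hp, -⟩ := h2 () none (Or.inl ⟨(), rfl⟩)
    exact hp
  · rintro ⟨R, hR, hr⟩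
    obtain ⟨h1, -⟩ := hR hr
    obtain ⟨q', hq, -⟩ := h1 () (Or.inl trivial) none (Or.inr trivial)
    exact hq
end

section
/- A relation R is a partial bisimulation with bisimulation set B between LTSs P and Q if and only if R is a covariant-contravariant simulation between P and Q viewed as covariant-contravariant LTSs with signature A^r = A \ B, A^l = ∅, A^bi = B. Consequently p ≲_B q iff p ≲cc q under this signature. -/
/-- `R` is a partial bisimulation with bisimulation set `B` iff it is a
covariant-contravariant simulation for the signature `Ar = A \ B`, `Al = ∅`, `Abi = B`;
consequently `p ≲_B q` iff `p ≲cc q` under this signature. -/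
theorem partial_bisim_iff_cc_sim (A S T : Type) (B : Set A)
    (P : LTS A S) (Q : LTS A T) :
    (∀ R : S → T → Prop, IsPB B P Q R ↔ IsCCSim Bᶜ ∅ B P Q R) ∧
    (∀ (p : S) (q : T), PBpre B P Q p q ↔ CCpre Bᶜ ∅ B P Q p q) := by
  constructor
  · intro R
    constructor
    · intro h p q hpq
      obtain ⟨h1, h2⟩ := h hpq
      refine ⟨fun a _ p' hp => h1 a p' hp, fun a ha q' hq => h2 a (by simpa using ha) q' hq⟩
    · intro h p q hpq
      obtain ⟨h1, h2⟩ := h hpq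
      refine ⟨fun a p' hp => h1 a (by simp [Set.mem_union]) p' hp,
        fun b hb q' hq => h2 b (Or.inr hb) q' hq⟩
  · intro p q
    constructor
    · rintro ⟨R, hR, hpq⟩
      refine ⟨R, ?_, hpq⟩
      intro p q hpq'
      obtain ⟨h1, h2⟩ := hR hpq'
      exact ⟨fun a ha p' hp => h1 a p' hp, fun a ha q' hq => h2 a (by simpa using ha) q' hq⟩
    · rintro ⟨R, hR, hpq⟩
      refine ⟨R, ?_, hpq⟩
      intro p q hpq'
      obtain ⟨h1, h2⟩ := hR hpq'
      exact ⟨fun a p' hp => h1 a (by simp [Set.mem_union]) p' hp,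
        fun b hb q' hq => h2 b (Or.inr hb) q' hq⟩
end

section
/- Assume a ∈ A^r and b ∈ A^l and let B = ∅. There is no translation T from LTSs (modulo ≲cc) to LTSs (modulo ≲_B, i.e., the plain simulation preorder) such that (1) for all p, q: p ≲cc q ⟺ T(p) ≲_B T(q), and (2) T(p + q) = T(p) + T(q) for the CCS nondeterministic choice operator +. -/
/-- with `a` covariant and `b` contravariant (and `B = ∅`), there is no
translation `T` on processes that is sound and complete (`p ≲cc q ⟺ T(p) ≲_∅ T(q)`,
where `≲_∅` is the plain simulation preorder) and compositional w.r.t. `+`. -/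
theorem no_compositional_translation_to_simulation (A : Type) (Ar Al : Set A)
    (hdisj : Disjoint Ar Al) (a b : A) (ha : a ∈ Ar) (hb : b ∈ Al) :
    ¬ ∃ T : Proc A → Proc A,
        (∀ p q : Proc A, CCpre Ar Al ∅ (PTr (A := A)) (PTr (A := A)) p q ↔
          SimPre (PTr (A := A)) (PTr (A := A)) (T p) (T q)) ∧
        (∀ p q : Proc A, T (p.plus q) = (T p).plus (T q)) := by

  rintro ⟨T, hiff, hplus⟩
  have hab : a ≠ b := fun h => hdisj.ne_of_mem ha hb h
  let p : Proc A := .act a .zero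
  let q : Proc A := .act b .zero
  -- T p ≲ T p + T q = T (p + q)
  have hsim : SimPre (PTr (A := A)) (PTr (A := A)) (T p) (T (p.plus q)) := by
    rw [hplus]
    refine ⟨fun x y => y = x ∨ y = x.plus (T q), ?_, Or.inr rfl⟩
    rintro x y (rfl | rfl) c x' hx
    · exact ⟨x', hx, Or.inl rfl⟩
    · exact ⟨x', PTr.plusL _ hx, Or.inl rfl⟩
  have hcc : CCpre Ar Al ∅ (PTr (A := A)) (PTr (A := A)) p (p.plus q) :=
    (hiff p (p.plus q)).2 hsim
  obtain ⟨R, hR, hpq⟩ := hcc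
  have h2 := (hR hpq).2 b (Or.inl hb) Proc.zero (PTr.plusR _ (PTr.act b .zero))
  obtain ⟨p', hp', -⟩ := h2
  rw [show p = Proc.act a Proc.zero from rfl] at hp'
  cases hp'
  exact hab rfl
end
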